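/- arXiv:1001.0242 — 2 statements merged into one kernel-verified Lean document; each statement's English description precedes it below -/
import Mathlib

section
/- Let Ω be an invertible class and β a class on ℙ^n, and let Q = {Q_{d,k}} and P = {P_{d,k}} be (0,1,β,Ω)-Euler data such that Q_{d,0} = P_{d,0} for all d ≥ 0, and such that for all 0 ≤ i ≤ n, all k ≥ 0 and all d ≥ 1 the polynomial Q_{d,k}(λ_i) − P_{d,k}(λ_i) ∈ F[ℏ] has degree at most (n+1)d − 1 in ℏ. Then Q = P, i.e. Q_{d,k} = P_{d,k} as classes on N_d for all d ≥ 0 and k ≥ 0. -/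
open Polynomial

set_option maxHeartbeats 1000000
set_option synthInstance.maxHeartbeats 400000

noncomputable section

/-- The ground field `F = ℂ(λ₀,…,λₙ)`, the field of rational functions in the
equivariant weights `λ₀,…,λₙ`. -/
def F (n : ℕ) : Type := FractionRing (MvPolynomial (Fin (n+1)) ℂ)

instance (n : ℕ) : Field (F n) :=
  inferInstanceAs (Field (FractionRing (MvPolynomial (Fin (n+1)) ℂ)))

instance (n : ℕ) : Algebra (MvPolynomial (Fin (n+1)) ℂ) (F n) :=
  inferInstanceAs (Algebra (MvPolynomial (Fin (n+1)) ℂ)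
    (FractionRing (MvPolynomial (Fin (n+1)) ℂ)))

/-- The weight `λᵢ` as an element of `F`. -/
def lam (n : ℕ) (i : Fin (n+1)) : F n :=
  algebraMap (MvPolynomial (Fin (n+1)) ℂ) (F n) (MvPolynomial.X i)

/-- The polynomial ring `F[ℏ]`.  The variable `X` plays the role of `ℏ`. -/
abbrev Fh (n : ℕ) : Type := Polynomial (F n)

/-- The element `λᵢ + rℏ` of `F[ℏ]`. -/
def pt (n : ℕ) (i : Fin (n+1)) (r : ℕ) : Fh n := C (lam n i) + (r : Fh n) * X

/-- The generator `∏_{l=0}^{n} ∏_{m=0}^{d} (κ − λ_l − mℏ)` of the relation ideal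
of the localized equivariant cohomology of `N_d`; the outer polynomial
variable `X` plays the role of `κ`. -/
def genN (n d : ℕ) : Polynomial (Fh n) :=
  ∏ l : Fin (n+1), ∏ m ∈ Finset.range (d+1), (X - C (pt n l m))

/-- Classes on the linear model `N_d`:
`F[ℏ][κ] / (∏_{l=0}^{n} ∏_{m=0}^{d} (κ − λ_l − mℏ))`. -/
abbrev ClassN (n d : ℕ) : Type :=
  Polynomial (Fh n) ⧸ Ideal.span {genN n d}

lemma eval_genN (n d : ℕ) (i : Fin (n+1)) (r : ℕ) (hr : r ≤ d) :
    Polynomial.eval (pt n i r) (genN n d) = 0 := by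
  rw [genN, Polynomial.eval_prod]
  refine Finset.prod_eq_zero (Finset.mem_univ i) ?_
  rw [Polynomial.eval_prod]
  refine Finset.prod_eq_zero (Finset.mem_range.mpr (Nat.lt_succ_of_le hr)) ?_
  simp

/-- Restriction `Q(λᵢ + rℏ) ∈ F[ℏ]` of a class `Q` on `N_d` (for `r ≤ d`):
evaluation of any representative at `κ = λᵢ + rℏ`. -/
def rest {n d : ℕ} (i : Fin (n+1)) (r : ℕ) (hr : r ≤ d) : ClassN n d →+* Fh n :=
  Ideal.Quotient.lift _ (Polynomial.evalRingHom (pt n i r)) (by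
    intro a ha
    rw [Ideal.mem_span_singleton] at ha
    obtain ⟨c, rfl⟩ := ha
    simp [eval_genN n d i r hr])

/-- `Ω`-Euler data, where the invertible class `Ω` on `ℙⁿ` is identified with the family
of its restrictions `Ω(λᵢ) ∈ F` (the weights `λᵢ` being pairwise distinct, a class on
`ℙⁿ` is precisely such a family). -/
def IsEulerData {n : ℕ} (Ω : Fin (n+1) → F n) (Q : (d : ℕ) → ClassN n d) : Prop :=
  (∀ i, rest i 0 le_rfl (Q 0) = C (Ω i)) ∧
  ∀ d r, 0 < r → ∀ hr : r < d, ∀ i : Fin (n+1),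
    C (Ω i) * rest i r hr.le (Q d) =
      rest i r le_rfl (Q r) * rest i 0 (Nat.zero_le _) (Q (d - r))

/-- `(0,1,β,Ω)`-Euler data; the classes `β`, `Ω` on `ℙⁿ` are identified with the
families of their restrictions at the fixed points. -/
def Is01EulerData {n : ℕ} (β Ω : Fin (n+1) → F n) (Q : (d : ℕ) → ℕ → ClassN n d) : Prop :=
  (∀ (k : ℕ) i, rest i 0 le_rfl (Q 0 k) = C (β i ^ k * Ω i)) ∧
  ∀ d, 1 ≤ d → ∀ r, ∀ hr : r ≤ d, ∀ i : Fin (n+1), ∀ k : ℕ,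
    C (Ω i) * rest i r hr (Q d k) =
      rest i r le_rfl (Q r 0) * rest i 0 (Nat.zero_le _) (Q (d - r) k)

end

/-!
Induct on `d`. For `r ≥ 1` the Euler condition expresses `Q_{d,k}(λᵢ + rℏ)` through
`Q_{r,0}` and `Q_{d-r,k}`, which agree with the corresponding classes of `P` (by hypothesis
and by induction), so `D = Q_{d,k} - P_{d,k}` vanishes at every `λⱼ + rℏ` with `1 ≤ r ≤ d`.
Then any representative of `D` is divisible by `∏_{j, 1 ≤ r ≤ d} (κ - λⱼ - rℏ)`, so `D(λᵢ)`
is divisible by `∏_{j, 1 ≤ r ≤ d} (λᵢ - λⱼ - rℏ)`, a polynomial of exact degree `(n+1)d`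
in `ℏ`. The degree bound forces `D(λᵢ) = 0`, so all restrictions of `D` vanish and `D = 0`.
-/

theorem Polynomial.prod_X_sub_C_dvd_of_isRoot {R ι : Type*} [CommRing R] [IsDomain R]
    {s : Finset ι} {p : ι → R} (hp : Set.InjOn p s) {f : R[X]}
    (hf : ∀ a ∈ s, f.IsRoot (p a)) : ∏ a ∈ s, (X - C (p a)) ∣ f := by
  classical
  rcases eq_or_ne f 0 with rfl | hf0
  · exact dvd_zero _
  rw [← Finset.prod_image (f := fun x => X - C x) hp]
  refine (Multiset.prod_X_sub_C_dvd_iff_le_roots hf0 _).2 ?_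
  refine (Multiset.le_iff_subset (Finset.nodup _)).2 fun x hx => ?_
  obtain ⟨a, ha, rfl⟩ := Finset.mem_image.1 hx
  exact (mem_roots hf0).2 (hf a ha)

instance (n : ℕ) : CharZero (F n) :=
  inferInstanceAs (CharZero (FractionRing (MvPolynomial (Fin (n+1)) ℂ)))

theorem lam_injective (n : ℕ) : Function.Injective (lam n) := fun _ _ h =>
  MvPolynomial.X_injective
    (IsFractionRing.injective (MvPolynomial (Fin (n+1)) ℂ)
      (FractionRing (MvPolynomial (Fin (n+1)) ℂ)) h)

theorem pt_eq (n : ℕ) (i : Fin (n+1)) (r : ℕ) : pt n i r = C (r : F n) * X + C (lam n i) := by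
  rw [pt, map_natCast, add_comm]

theorem pt_uncurry_injective (n : ℕ) : Function.Injective (Function.uncurry (pt n)) := by
  rintro ⟨i, r⟩ ⟨j, s⟩ h
  simp only [Function.uncurry_apply_pair, pt_eq] at h
  have hlam : lam n i = lam n j := by simpa using congrArg (coeff · 0) h
  have hr : (r : F n) = s := by simpa using congrArg (coeff · 1) h
  rw [lam_injective n hlam, Nat.cast_injective hr]

theorem natDegree_pt_sub_pt (n : ℕ) (i j : Fin (n+1)) {r : ℕ} (hr : r ≠ 0) :
    (pt n i 0 - pt n j r).natDegree = 1 := by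
  have h : pt n i 0 - pt n j r = C (-(r : F n)) * X + C (lam n i - lam n j) := by
    simp only [pt_eq, Nat.cast_zero, map_zero, zero_mul, zero_add, map_neg, map_sub]
    ring
  rw [h, natDegree_linear (neg_ne_zero.2 (Nat.cast_ne_zero.2 hr))]

theorem natDegree_prod_pt_sub_pt (n d : ℕ) (i : Fin (n+1)) :
    (∏ x ∈ Finset.univ ×ˢ Finset.Icc 1 d, (pt n i 0 - pt n x.1 x.2)).natDegree = (n+1) * d := by
  have hdeg : ∀ x ∈ Finset.univ ×ˢ Finset.Icc 1 d, (pt n i 0 - pt n x.1 x.2).natDegree = 1 :=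
    fun x hx => natDegree_pt_sub_pt n i x.1 (by simp at hx; omega)
  rw [natDegree_prod _ _ fun x hx => ne_zero_of_natDegree_gt (hdeg x hx).symm.le,
    Finset.sum_congr rfl hdeg]
  simp

section ClassN

variable {n d : ℕ}

theorem rest_mk (i : Fin (n+1)) (r : ℕ) (hr : r ≤ d) (f : Polynomial (Fh n)) :
    rest i r hr (Ideal.Quotient.mk _ f) = f.eval (pt n i r) := rfl

theorem ClassN.eq_zero_of_forall_rest_eq_zero {D : ClassN n d}
    (h : ∀ i r (hr : r ≤ d), rest i r hr D = 0) : D = 0 := by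
  obtain ⟨f, rfl⟩ := Ideal.Quotient.mk_surjective D
  rw [Ideal.Quotient.eq_zero_iff_mem, Ideal.mem_span_singleton, genN, ← Finset.prod_product']
  refine prod_X_sub_C_dvd_of_isRoot (p := Function.uncurry (pt n))
    (pt_uncurry_injective n).injOn fun x hx => ?_
  exact h x.1 x.2 (Nat.lt_succ_iff.1 (Finset.mem_range.1 (Finset.mem_product.1 hx).2))

theorem prod_pt_sub_pt_dvd_rest_zero {D : ClassN n d}
    (hD : ∀ j r, 1 ≤ r → ∀ hr : r ≤ d, rest j r hr D = 0) (i : Fin (n+1)) :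
    ∏ x ∈ Finset.univ ×ˢ Finset.Icc 1 d, (pt n i 0 - pt n x.1 x.2) ∣
      rest i 0 (Nat.zero_le d) D := by
  obtain ⟨f, rfl⟩ := Ideal.Quotient.mk_surjective D
  have hdvd : ∏ x ∈ Finset.univ ×ˢ Finset.Icc 1 d, (X - C (Function.uncurry (pt n) x)) ∣ f := by
    refine prod_X_sub_C_dvd_of_isRoot (pt_uncurry_injective n).injOn fun x hx => ?_
    obtain ⟨hx1, hxd⟩ := Finset.mem_Icc.1 (Finset.mem_product.1 hx).2
    exact hD x.1 x.2 hx1 hxd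
  have h := eval_dvd (x := pt n i 0) hdvd
  simp only [eval_prod, eval_sub, eval_X, eval_C] at h
  exact h

theorem rest_zero_eq_zero_of_degree_lt {D : ClassN n d}
    (hD : ∀ j r, 1 ≤ r → ∀ hr : r ≤ d, rest j r hr D = 0) (i : Fin (n+1))
    (hdeg : (rest i 0 (Nat.zero_le d) D).degree < ((n+1) * d : ℕ)) :
    rest i 0 (Nat.zero_le d) D = 0 := by
  by_contra hne
  have hle := natDegree_le_of_dvd (prod_pt_sub_pt_dvd_rest_zero hD i) hne
  rw [natDegree_prod_pt_sub_pt, ← Nat.cast_le (α := WithBot ℕ), ← degree_eq_natDegree hne] at hle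
  exact hle.not_gt hdeg

end ClassN

theorem Is01EulerData.rest_eq_of_eq {n : ℕ} {β Ω : Fin (n+1) → F n} (hΩ : ∀ i, Ω i ≠ 0)
    {Q P : (d : ℕ) → ℕ → ClassN n d} (hQ : Is01EulerData β Ω Q) (hP : Is01EulerData β Ω P)
    {d r k : ℕ} (hd : 1 ≤ d) (hr : r ≤ d) (hr0 : Q r 0 = P r 0)
    (hk : Q (d - r) k = P (d - r) k) (i : Fin (n+1)) :
    rest i r hr (Q d k) = rest i r hr (P d k) :=
  mul_left_cancel₀ (C_ne_zero.2 (hΩ i)) <| by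
    rw [hQ.2 d hd r hr i k, hP.2 d hd r hr i k, hr0, hk]

theorem uniqueness_01_euler_data_general (n : ℕ)
    (β Ω : Fin (n+1) → F n) (hΩ : ∀ i, Ω i ≠ 0)
    (Q P : (d : ℕ) → ℕ → ClassN n d)
    (hQ : Is01EulerData β Ω Q) (hP : Is01EulerData β Ω P)
    (h0 : ∀ d, Q d 0 = P d 0)
    (hdeg : ∀ (i : Fin (n+1)) (k d : ℕ), 1 ≤ d →
      (rest i 0 (Nat.zero_le d) (Q d k) - rest i 0 (Nat.zero_le d) (P d k)).degree
        ≤ ((n+1) * d - 1 : ℕ)) :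
    ∀ (d k : ℕ), Q d k = P d k := by
  intro d
  induction d using Nat.strong_induction_on with
  | _ d ih =>
    intro k
    refine sub_eq_zero.1 <| ClassN.eq_zero_of_forall_rest_eq_zero fun i r hr => ?_
    rcases Nat.eq_zero_or_pos d with rfl | hd
    · obtain rfl := Nat.le_zero.1 hr
      rw [map_sub, hQ.1, hP.1, sub_self]
    have hhigh : ∀ j r, 1 ≤ r → ∀ hr : r ≤ d,
        rest j r hr (Q d k - P d k) = 0 := fun j r hr1 hr => by
      rw [map_sub, sub_eq_zero]
      exact hQ.rest_eq_of_eq hΩ hP hd hr (h0 r) (ih _ (by omega) k) j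
    rcases Nat.eq_zero_or_pos r with rfl | hr1
    · refine rest_zero_eq_zero_of_degree_lt hhigh i ?_
      rw [map_sub]
      refine (hdeg i k d hd).trans_lt ?_
      exact_mod_cast Nat.sub_lt (Nat.mul_pos (Nat.succ_pos n) hd) one_pos
    · exact hhigh i r hr1 hr

/-- **Uniqueness Lemma for (0,1)-Euler data** (Lemma 3.4 of the paper).
If `Q` and `P` are `(0,1,β,Ω)`-Euler data with the same height-`0` part whose
difference of restrictions at `ℏ = 0`-side fixed points has `ℏ`-degree at most
`(n+1)d − 1`, then `Q = P`. -/
theorem uniqueness_01_euler_data (n : ℕ) (hn : 1 ≤ n)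
    (β Ω : Fin (n+1) → F n) (hΩ : ∀ i, Ω i ≠ 0)
    (Q P : (d : ℕ) → ℕ → ClassN n d)
    (hQ : Is01EulerData β Ω Q) (hP : Is01EulerData β Ω P)
    (h0 : ∀ d, Q d 0 = P d 0)
    (hdeg : ∀ (i : Fin (n+1)) (k d : ℕ), 1 ≤ d →
      (rest i 0 (Nat.zero_le d) (Q d k) - rest i 0 (Nat.zero_le d) (P d k)).degree
        ≤ ((n+1) * d - 1 : ℕ)) :
    ∀ (d k : ℕ), Q d k = P d k :=
  uniqueness_01_euler_data_general n β Ω hΩ Q P hQ hP h0 hdeg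
end

section
/- Let Q = {Q_{d,k}} and P = {P_{d,k}} be (0,1,β,Ω)-Euler data with Q_{d,0} = P_{d,0} for all d ≥ 0. Fix k ≥ 1 and d ≥ 1 and suppose that Q_{d′,k} = P_{d′,k} for all 0 ≤ d′ < d. Then for each 0 ≤ i ≤ n the polynomial Q_{d,k}(λ_i) − P_{d,k}(λ_i) ∈ F[ℏ] is divisible by ∏_{j≠i} ∏_{m=1}^{d} (λ_i − λ_j − mℏ) in F[ℏ]. -/
open Polynomial

set_option maxHeartbeats 1000000
set_option synthInstance.maxHeartbeats 400000

/-! For `1 ≤ m ≤ d` the Euler condition at `λⱼ + mℏ` expresses `Ω(λⱼ) Q_{d,k}(λⱼ + mℏ)` through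
`Q_{m,0}` and `Q_{d-m,k}` only, so `Q_{d,k}` and `P_{d,k}` have the same restriction there. The
specialisation `ℏ = (λᵢ - λⱼ)/m` makes the points `λᵢ` and `λⱼ + mℏ` coincide, so it is a root of
`Q_{d,k}(λᵢ) - P_{d,k}(λᵢ)`. Since the `λ`'s are independent indeterminates these roots are pairwise
distinct, and the product of the corresponding linear factors divides the difference. -/

namespace Polynomial

variable {R : Type*} [CommRing R]

lemma eval_eval_eq_of_eval_eq (f : R[X][X]) {u v : R[X]} {ρ : R} (h : u.eval ρ = v.eval ρ) :
    (f.eval u).eval ρ = (f.eval v).eval ρ := by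
  calc (f.eval u).eval ρ = f.eval₂ (evalRingHom ρ) (u.eval ρ) :=
        (eval₂_at_apply (evalRingHom ρ) u).symm
    _ = (f.eval v).eval ρ := by rw [h]; exact eval₂_at_apply (evalRingHom ρ) v

lemma C_sub_C_mul_X_eq {K : Type*} [Field K] (a : K) {b : K} (hb : b ≠ 0) :
    C a - C b * X = C (-b) * (X - C (a / b)) := by
  rw [mul_sub, ← C_mul, neg_mul, mul_div_cancel₀ a hb, C_neg, C_neg]
  ring

lemma prod_C_sub_C_mul_X_dvd {K ι : Type*} [Field K] {s : Finset ι} {a b : ι → K} {T : K[X]}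
    (hb : ∀ x ∈ s, b x ≠ 0) (hinj : Set.InjOn (fun x ↦ a x / b x) s)
    (hT : ∀ x ∈ s, T.IsRoot (a x / b x)) :
    ∏ x ∈ s, (C (a x) - C (b x) * X) ∣ T := by
  rw [Finset.prod_congr rfl fun x hx ↦ C_sub_C_mul_X_eq (a x) (hb x hx), Finset.prod_mul_distrib]
  refine (IsUnit.mul_left_dvd ?_).mpr ?_
  · exact IsUnit.prod_iff.mpr fun x hx ↦ isUnit_C.mpr (neg_ne_zero.mpr (hb x hx)).isUnit
  · refine Finset.prod_dvd_of_coprime (fun x hx y hy hxy ↦ ?_) fun x hx ↦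
      dvd_iff_isRoot.mpr (hT x hx)
    exact isCoprime_X_sub_C_of_isUnit_sub (sub_ne_zero.mpr (hinj.ne hx hy hxy)).isUnit

end Polynomial

namespace MvPolynomial

lemma eq_of_natCast_mul_X_sub_X_eq {σ R : Type*} [CommRing R] [IsDomain R]
    [CharZero R] {i j j' : σ} {m m' : ℕ} (hj : j ≠ i) (hj' : j' ≠ i) (hm : m ≠ 0)
    (h : (m' : MvPolynomial σ R) * (MvPolynomial.X i - MvPolynomial.X j) =
      (m : MvPolynomial σ R) * (MvPolynomial.X i - MvPolynomial.X j')) :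
    m' = m ∧ j = j' := by
  have hm' : m' = m := by
    simpa [pderiv_X_of_ne hj, pderiv_X_of_ne hj'] using congrArg (pderiv (R := R) i) h
  subst hm'
  refine ⟨rfl, MvPolynomial.X_injective (R := R) ?_⟩
  simpa using mul_left_cancel₀ (Nat.cast_ne_zero.mpr hm) h

end MvPolynomial

section Weights

variable {n : ℕ}

lemma algebraMap_F_injective :
    Function.Injective (algebraMap (MvPolynomial (Fin (n+1)) ℂ) (F n)) :=
  IsFractionRing.injective (MvPolynomial (Fin (n+1)) ℂ)
    (FractionRing (MvPolynomial (Fin (n+1)) ℂ))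

instance : CharZero (F n) := charZero_of_injective_algebraMap algebraMap_F_injective

lemma injOn_lam_sub_div (i : Fin (n+1)) :
    Set.InjOn (fun jm : Fin (n+1) × ℕ ↦ (lam n i - lam n jm.1) / (jm.2 : F n))
      {jm | jm.1 ≠ i ∧ jm.2 ≠ 0} := by
  rintro ⟨j, m⟩ ⟨hj, hm⟩ ⟨j', m'⟩ ⟨hj', hm'⟩ h
  dsimp only at hj hm hj' hm' h
  rw [div_eq_div_iff (Nat.cast_ne_zero.mpr hm) (Nat.cast_ne_zero.mpr hm')] at h
  have h' : (m' : MvPolynomial (Fin (n+1)) ℂ) * (MvPolynomial.X i - MvPolynomial.X j) =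
      (m : MvPolynomial (Fin (n+1)) ℂ) * (MvPolynomial.X i - MvPolynomial.X j') :=
    algebraMap_F_injective (by simpa [lam, mul_comm] using h)
  obtain ⟨rfl, rfl⟩ := MvPolynomial.eq_of_natCast_mul_X_sub_X_eq hj hj' hm h'
  rfl

lemma eval_pt (i : Fin (n+1)) (r : ℕ) (ρ : F n) : (pt n i r).eval ρ = lam n i + r * ρ := by
  simp [pt]

end Weights

section Classes

variable {n d : ℕ}

lemma eval_rest_eq_of_eval_pt_eq (x : ClassN n d) {i j : Fin (n+1)} {r s : ℕ} (hr : r ≤ d)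
    (hs : s ≤ d) {ρ : F n} (h : (pt n i r).eval ρ = (pt n j s).eval ρ) :
    (rest i r hr x).eval ρ = (rest j s hs x).eval ρ := by
  obtain ⟨q, rfl⟩ := Ideal.Quotient.mk_surjective x
  exact eval_eval_eq_of_eval_eq q h

lemma isRoot_rest_zero_of_rest_eq_zero (x : ClassN n d) {i j : Fin (n+1)} {m : ℕ} (hm : m ≠ 0)
    (hmd : m ≤ d) (hx : rest j m hmd x = 0) :
    (rest i 0 d.zero_le x).IsRoot ((lam n i - lam n j) / m) := by
  have hpt : (pt n i 0).eval ((lam n i - lam n j) / m) =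
      (pt n j m).eval ((lam n i - lam n j) / m) := by
    rw [eval_pt, eval_pt, mul_div_cancel₀ _ (Nat.cast_ne_zero.mpr hm)]
    ring
  rw [IsRoot, eval_rest_eq_of_eval_pt_eq x _ hmd hpt, hx, eval_zero]

lemma Is01EulerData.rest_eq {β Ω : Fin (n+1) → F n} (hΩ : ∀ i, Ω i ≠ 0)
    {Q P : (d : ℕ) → ℕ → ClassN n d} (hQ : Is01EulerData β Ω Q) (hP : Is01EulerData β Ω P)
    (h0 : ∀ d, Q d 0 = P d 0) {k : ℕ} (hlow : ∀ d' < d, Q d' k = P d' k) {m : ℕ} (hm : m ≠ 0)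
    (hmd : m ≤ d) (j : Fin (n+1)) :
    rest j m hmd (Q d k) = rest j m hmd (P d k) := by
  have hQ' := hQ.2 d (by omega) m hmd j k
  rw [h0 m, hlow (d - m) (by omega), ← hP.2 d (by omega) m hmd j k] at hQ'
  exact mul_left_cancel₀ (C_ne_zero.mpr (hΩ j)) hQ'

end Classes

theorem difference_divisible_general (n : ℕ)
    (β Ω : Fin (n+1) → F n) (hΩ : ∀ i, Ω i ≠ 0)
    (Q P : (d : ℕ) → ℕ → ClassN n d)
    (hQ : Is01EulerData β Ω Q) (hP : Is01EulerData β Ω P)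
    (h0 : ∀ d, Q d 0 = P d 0)
    (k : ℕ) (d : ℕ)
    (hlow : ∀ d' : ℕ, d' < d → Q d' k = P d' k) :
    ∀ i : Fin (n+1),
      (∏ j ∈ Finset.univ.erase i, ∏ m ∈ Finset.Icc 1 d,
          (C (lam n i - lam n j) - (m : Fh n) * X)) ∣
        (rest i 0 (Nat.zero_le d) (Q d k) - rest i 0 (Nat.zero_le d) (P d k)) := by
  intro i
  have hS : ↑((Finset.univ.erase i) ×ˢ Finset.Icc 1 d) ⊆
      {jm : Fin (n+1) × ℕ | jm.1 ≠ i ∧ jm.2 ≠ 0} := by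
    intro jm hjm
    simp only [Finset.coe_product, Set.mem_prod, Finset.mem_coe, Finset.mem_erase,
      Finset.mem_Icc] at hjm
    exact ⟨hjm.1.1, by omega⟩
  rw [← map_sub, ← Finset.prod_product']
  simp_rw [← C_eq_natCast]
  refine prod_C_sub_C_mul_X_dvd (fun jm hjm ↦ Nat.cast_ne_zero.mpr (hS hjm).2)
    ((injOn_lam_sub_div i).mono hS) fun ⟨j, m⟩ hjm ↦ ?_
  have hmd : m ≤ d := (Finset.mem_Icc.mp (Finset.mem_product.mp hjm).2).2
  refine isRoot_rest_zero_of_rest_eq_zero _ (hS hjm).2 hmd ?_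
  rw [map_sub, sub_eq_zero]
  exact hQ.rest_eq hΩ hP h0 hlow (hS hjm).2 hmd j

/-- Divisibility of the difference `Q_{d,k}(λᵢ) − P_{d,k}(λᵢ)` by
`∏_{j≠i} ∏_{m=1}^{d} (λᵢ − λⱼ − mℏ)`, for `(0,1,β,Ω)`-Euler data agreeing at
height `0` and (at height `k`) in all degrees `< d`. -/
theorem difference_divisible (n : ℕ) (hn : 1 ≤ n)
    (β Ω : Fin (n+1) → F n) (hΩ : ∀ i, Ω i ≠ 0)
    (Q P : (d : ℕ) → ℕ → ClassN n d)
    (hQ : Is01EulerData β Ω Q) (hP : Is01EulerData β Ω P)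
    (h0 : ∀ d, Q d 0 = P d 0)
    (k : ℕ) (hk : 1 ≤ k) (d : ℕ) (hd : 1 ≤ d)
    (hlow : ∀ d' : ℕ, d' < d → Q d' k = P d' k) :
    ∀ i : Fin (n+1),
      (∏ j ∈ Finset.univ.erase i, ∏ m ∈ Finset.Icc 1 d,
          (C (lam n i - lam n j) - (m : Fh n) * X)) ∣
        (rest i 0 (Nat.zero_le d) (Q d k) - rest i 0 (Nat.zero_le d) (P d k)) :=
  difference_divisible_general n β Ω hΩ Q P hQ hP h0 k d hlow
end
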